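/- arXiv:math/0606747 — 2 statements merged into one kernel-verified Lean document; each statement's English description precedes it below -/
import Mathlib

section
/- With the notation of the previous statement, let I = ‖Σ_{i ∈ Z₁} (mean_Z(d) − d_i)‖ be the refinement indicator for the split of Z into Z₁, Z₂ under the identity model. Then I = (n₁ n₂ / n)·|mean_{Z₁}(d) − mean_{Z₂}(d)| and the objective decrease equals ½ · (n/(n₁ n₂)) · I². -/
theorem refinement_indicator_identity_model {N : ℕ} (d : Fin N → ℝ)
    (Z Z1 Z2 : Finset (Fin N))
    (hZ1 : Z1.Nonempty) (hZ2 : Z2.Nonempty)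
    (hdisj : Disjoint Z1 Z2) (hunion : Z = Z1 ∪ Z2)
    (mean : Finset (Fin N) → ℝ)
    (hmean : ∀ W, mean W = (∑ i ∈ W, d i) / (W.card : ℝ))
    (S : Finset (Fin N) → ℝ)
    (hS : ∀ W, S W = ∑ i ∈ W, (d i - mean W) ^ 2)
    (I : ℝ) (hI : I = |∑ i ∈ Z1, (mean Z - d i)|) :
    I = ((Z1.card : ℝ) * (Z2.card : ℝ) / (Z.card : ℝ)) * |mean Z1 - mean Z2|
    ∧ S Z / 2 - (S Z1 + S Z2) / 2
      = (1/2) * ((Z.card : ℝ) / ((Z1.card : ℝ) * (Z2.card : ℝ))) * I ^ 2 := by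
  set n1 : ℝ := (Z1.card : ℝ) with hn1
  set n2 : ℝ := (Z2.card : ℝ) with hn2
  have hn1pos : 0 < n1 := by exact_mod_cast Nat.cast_pos.mpr (Finset.card_pos.mpr hZ1)
  have hn2pos : 0 < n2 := by exact_mod_cast Nat.cast_pos.mpr (Finset.card_pos.mpr hZ2)
  have hcard : (Z.card : ℝ) = n1 + n2 := by
    rw [hunion, Finset.card_union_of_disjoint hdisj]; push_cast; ring
  have hnpos : 0 < (Z.card : ℝ) := by rw [hcard]; linarith
  set s1 : ℝ := ∑ i ∈ Z1, d i with hs1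
  set s2 : ℝ := ∑ i ∈ Z2, d i with hs2
  have hsZ : ∑ i ∈ Z, d i = s1 + s2 := by
    rw [hunion, Finset.sum_union hdisj]
  set q1 : ℝ := ∑ i ∈ Z1, (d i)^2 with hq1
  set q2 : ℝ := ∑ i ∈ Z2, (d i)^2 with hq2
  have hqZ : ∑ i ∈ Z, (d i)^2 = q1 + q2 := by
    rw [hunion, Finset.sum_union hdisj]
  have key : ∀ (W : Finset (Fin N)), (W.card : ℝ) ≠ 0 →
      S W = ∑ i ∈ W, (d i)^2 - (∑ i ∈ W, d i)^2 / (W.card : ℝ) := by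
    intro W hW
    rw [hS, hmean]
    have expand : ∀ i ∈ W, (d i - (∑ j ∈ W, d j) / (W.card : ℝ))^2 =
        (d i)^2 - 2 * ((∑ j ∈ W, d j) / (W.card : ℝ)) * d i
          + ((∑ j ∈ W, d j) / (W.card : ℝ))^2 := by
      intro i _; ring
    rw [Finset.sum_congr rfl expand]
    rw [Finset.sum_add_distrib, Finset.sum_sub_distrib, ← Finset.mul_sum,
      Finset.sum_const, nsmul_eq_mul]
    field_simp
    ring
  have hA : ∑ i ∈ Z1, (mean Z - d i) = (n1 * n2 / (Z.card : ℝ)) * (mean Z2 - mean Z1) := by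
    rw [Finset.sum_sub_distrib, Finset.sum_const, nsmul_eq_mul, hmean, hmean, hmean,
      hsZ, hcard, ← hs1, ← hs2]
    field_simp
    ring
  have hI2 : I = (n1 * n2 / (Z.card : ℝ)) * |mean Z1 - mean Z2| := by
    rw [hI, hA, abs_mul, abs_sub_comm, abs_of_nonneg (by positivity)]
  refine ⟨hI2, ?_⟩
  have hSZ := key Z (ne_of_gt hnpos)
  have hSZ1 := key Z1 (ne_of_gt hn1pos)
  have hSZ2 := key Z2 (ne_of_gt hn2pos)
  rw [hSZ, hSZ1, hSZ2, hqZ, hsZ, hI2, hcard, ← hs1, ← hs2, ← hq1, ← hq2]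
  rw [mul_pow, sq_abs, hmean, hmean, ← hs1, ← hs2, ← hn1, ← hn2]
  field_simp
  ring
end

section
/- Let P : ℝ^n → ℝ^N be the piecewise-constant parameterization for a partition of {1,…,N} into nonempty zones, and let Q : ℝ^{n+1} → ℝ^N be the parameterization for the refined partition obtained by splitting one zone into two nonempty subzones. Then the range of P is strictly contained in the range of Q; consequently, for any d ∈ ℝ^N, min_{m'} ½‖Q m' − d‖² ≤ min_m ½‖P m − d‖². -/
theorem refinement_range_strict_and_misfit_decrease {N n : ℕ}
    (z : Fin N → Fin n) (z' : Fin N → Fin (n+1)) (r : Fin (n+1) → Fin n)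
    (hz' : Function.Surjective z')
    (hcomp : z = r ∘ z')
    (hr : Function.Surjective r)
    (hsplit : ∃ j1 j2 : Fin (n+1), j1 ≠ j2 ∧ r j1 = r j2 ∧
      ∀ a b, r a = r b → a = b ∨ (a = j1 ∧ b = j2) ∨ (a = j2 ∧ b = j1))
    (P : (Fin n → ℝ) → EuclideanSpace ℝ (Fin N))
    (hP : ∀ m, P m = fun i => m (z i))
    (Q : (Fin (n+1) → ℝ) → EuclideanSpace ℝ (Fin N))
    (hQ : ∀ m', Q m' = fun i => m' (z' i)) :
    Set.range P ⊂ Set.range Q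
    ∧ ∀ d : EuclideanSpace ℝ (Fin N), ∀ m : Fin n → ℝ, ∃ m' : Fin (n+1) → ℝ,
        (1/2) * ‖Q m' - d‖ ^ 2 ≤ (1/2) * ‖P m - d‖ ^ 2 := by
  have key : ∀ m : Fin n → ℝ, Q (m ∘ r) = P m := by
    intro m
    apply WithLp.ofLp_injective
    rw [hP, hQ]
    funext i
    simp [hcomp, Function.comp]
  constructor
  · constructor
    · rintro x ⟨m, rfl⟩
      exact ⟨m ∘ r, key m⟩
    · obtain ⟨j1, j2, hne, hrj, _⟩ := hsplit
      intro hsub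
      set m' : Fin (n+1) → ℝ := fun j => if j = j1 then 1 else 0 with hm'
      obtain ⟨m, hm⟩ := hsub ⟨m', rfl⟩
      obtain ⟨i1, hi1⟩ := hz' j1
      obtain ⟨i2, hi2⟩ := hz' j2
      replace hm := congrArg WithLp.ofLp hm
      rw [hP, hQ] at hm
      have h1 : m (z i1) = 1 := by
        have := congrFun hm i1
        simpa [hi1, hm'] using this
      have h2 : m (z i2) = 0 := by
        have := congrFun hm i2
        simpa [hi2, hm', hne.symm] using this
      have : z i1 = z i2 := by
        simp [hcomp, Function.comp, hi1, hi2, hrj]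
      rw [this, h2] at h1
      norm_num at h1
  · intro d m
    exact ⟨m ∘ r, by rw [key m]⟩
end
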